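/- The HP theory does not satisfy the principle of presumption. Concretely, in the Jane–Julie model M₂, J₁ is a preempted cause of (B = 0) with respect to HP (it is a putative cause but J₁ ∉ HP(M₂,(B = 0))), yet there exists M' ∈ ℳ(HP(M₂,(B = 0))) with S_{M'}(J₁) = S_{M₂}(J₁) and J₁ ∈ ButFor(M',(B = 0)) such that every variable W ∉ HP(M₂,(B = 0)) satisfies S_{M₂}(W) = S_{M'}(W). -/

import Mathlib

namespace HPFramework

open Classical

/-- A causal model in the Halpern–Pearl framework, over exogenous variables `U`,
endogenous variables `V` and value domain `D`.  It packages the causal structure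
(the finite ranges of the variables), the DAG (the well-founded `parent` relation),
the structural equations `F` (each depending only on the exogenous variables and the
parents, and taking values in the range), and the context `ctx`. -/
structure CausalModel (U V D : Type) [Fintype U] [Fintype V] where
  rangeU : U → Finset D
  range : V → Finset D
  rangeU_nonempty : ∀ W, (rangeU W).Nonempty
  range_nonempty : ∀ X, (range X).Nonempty
  parent : V → V → Prop
  acyclic : WellFounded parent
  F : V → (U → D) → (V → D) → D
  F_parents : ∀ X u (a b : V → D), (∀ Y, parent Y X → a Y = b Y) → F X u a = F X u b
  F_range : ∀ X u v, (∀ W, u W ∈ rangeU W) → (∀ Y, v Y ∈ range Y) → F X u v ∈ range X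
  ctx : U → D
  ctx_range : ∀ W, ctx W ∈ rangeU W

variable {U V D : Type} [Fintype U] [Fintype V]

/-- The unique solution `S_M` of the system of structural equations of `M`. -/
noncomputable def sol (M : CausalModel U V D) : V → D :=
  WellFounded.fix M.acyclic fun X ih =>
    M.F X M.ctx fun Y => if h : M.parent Y X then ih Y h else (M.range_nonempty Y).choose

/-- A partial, range-permitted assignment of values to the endogenous variables of `M`. -/
def PAssign (M : CausalModel U V D) : Type :=
  {g : V → Option D // ∀ X d, g X = some d → d ∈ M.range X}

/-- The intervened model `M_[X⃗ ← x⃗]`: the equation of each variable assigned a value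
by `g` is replaced by the corresponding constant; other equations are unchanged. -/
noncomputable def intervene (M : CausalModel U V D) (g : PAssign M) : CausalModel U V D where
  rangeU := M.rangeU
  range := M.range
  rangeU_nonempty := M.rangeU_nonempty
  range_nonempty := M.range_nonempty
  parent := M.parent
  acyclic := M.acyclic
  F := fun X u v => (g.1 X).getD (M.F X u v)
  F_parents := by
    intro X u a b hab
    cases h : g.1 X with
    | none => simp only [h, Option.getD_none]; exact M.F_parents X u a b hab
    | some d => simp [h]
  F_range := by
    intro X u v hu hv
    cases h : g.1 X with
    | none => simpa [h] using M.F_range X u v hu hv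
    | some d => simpa [h] using g.2 X d h
  ctx := M.ctx
  ctx_range := M.ctx_range

/-- Basic formulas: Boolean combinations of atoms `(X = x)` with `X` endogenous. -/
inductive BForm (V D : Type) : Type where
  | atom : V → D → BForm V D
  | not : BForm V D → BForm V D
  | and : BForm V D → BForm V D → BForm V D

/-- Evaluation of a basic formula at an assignment of values to the endogenous variables. -/
def BForm.eval (s : V → D) : BForm V D → Prop
  | .atom X x => s X = x
  | .not φ => ¬ φ.eval s
  | .and φ ψ => φ.eval s ∧ ψ.eval s

/-- `M ⊨ φ` for a basic formula `φ`, evaluated via the solution `S_M`. -/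
def Sat (M : CausalModel U V D) (φ : BForm V D) : Prop := (BForm.eval (sol M)) φ

variable [DecidableEq V]

/-- The single intervention `[X ← x]` (with `x` in the range of `X`). -/
noncomputable def single (M : CausalModel U V D) (X : V) (x : D)
    (hx : x ∈ M.range X) : PAssign M :=
  ⟨fun Y => if Y = X then some x else none, by
    intro Y d h
    simp only at h
    split at h
    next heq => cases h; exact heq ▸ hx
    next => cases h⟩

/-- The but-for theory: `X ∈ ButFor(M,φ)` iff `M ⊨ φ` and there is `x ∈ R(X)` with
`M ⊨ [X ← x] ¬φ`. -/
noncomputable def ButFor (M : CausalModel U V D) (φ : BForm V D) : Set V :=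
  {X | Sat M φ ∧ ∃ x, ∃ hx : x ∈ M.range X, ¬ Sat (intervene M (single M X x hx)) φ}

/-- `ℳ(A)` (relative to `M`): all models obtained from `M` by a (possibly partial)
range-permitted assignment to the variables in `A`, while any assigned variable outside
`A` is held fixed at its actual value in `M`. -/
def MSet (M : CausalModel U V D) (A : Set V) : Set (CausalModel U V D) :=
  {M' | ∃ g : PAssign M,
    (∀ X, X ∉ A → ∀ d, g.1 X = some d → d = sol M X) ∧ M' = intervene M g}

/-- A causal theory: a map assigning to every model and basic formula a set of
endogenous variables (the causes). -/
def CausalTheory (U V D : Type) [Fintype U] [Fintype V] : Type _ :=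
  CausalModel U V D → BForm V D → Set V

/-- `X` is a putative cause of `φ` in `M` (w.r.t. the theory `C`). -/
noncomputable def Putative (C : CausalTheory U V D) (M : CausalModel U V D)
    (φ : BForm V D) (X : V) : Prop :=
  ∃ M' ∈ MSet M (C M φ), sol M X = sol M' X ∧ X ∈ ButFor M' φ

/-- `X` is a preempted cause of `φ` in `M` (w.r.t. `C`): putative but not a cause. -/
noncomputable def Preempted (C : CausalTheory U V D) (M : CausalModel U V D)
    (φ : BForm V D) (X : V) : Prop :=
  Putative C M φ X ∧ X ∉ C M φ

/-- A theory is similarity-based if it recognises at least all but-for causes and at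
most all putative causes. -/
noncomputable def SimilarityBased (C : CausalTheory U V D) : Prop :=
  ∀ M φ, ButFor M φ ⊆ C M φ ∧ ∀ X ∈ C M φ, Putative C M φ X

/-- The principle of presumption. -/
noncomputable def Presumption (C : CausalTheory U V D) : Prop :=
  ∀ M φ X, Preempted C M φ X →
    ∀ M' ∈ MSet M (C M φ), sol M' X = sol M X → X ∈ ButFor M' φ →
      ∃ W, W ∉ C M φ ∧ sol M W ≠ sol M' W

/-- Empirical causal theories (fixed-point characterisation). -/
noncomputable def Empirical (C : CausalTheory U V D) : Prop :=
  ∀ M φ X, X ∈ C M φ ↔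
    ∃ M' ∈ MSet M (C M φ), sol M X = sol M' X ∧ X ∈ ButFor M' φ ∧
      ∀ W, W ∉ C M φ → sol M W = sol M' W

/-- The relation `M₁ ⊑_{C,φ} M₂`. -/
noncomputable def CRel (C : CausalTheory U V D) (φ : BForm V D)
    (M₁ M₂ : CausalModel U V D) : Prop :=
  M₂ ∈ MSet M₁ (C M₁ φ) ∧ Sat M₂ φ ∧ ∀ X, X ∉ C M₁ φ → sol M₁ X = sol M₂ X

/-- The closure property. -/
noncomputable def Closure (C : CausalTheory U V D) : Prop :=
  ∀ (M : CausalModel U V D) (φ : BForm V D) M', CRel C φ M M' → C M' φ ⊆ C M φ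

/-- AC1 and AC2 of Halpern's (2015) definition, for the set `Xs`: `M ⊨ φ` and there is
an intervention assigning (range-permitted) values to all of `Xs` and holding any other
assigned variable fixed at its actual value, after which `¬φ` holds. -/
noncomputable def AC12 (M : CausalModel U V D) (φ : BForm V D) (Xs : Set V) : Prop :=
  Sat M φ ∧ ∃ g : PAssign M,
    (∀ X ∈ Xs, (g.1 X).isSome) ∧
    (∀ X, X ∉ Xs → ∀ d, g.1 X = some d → d = sol M X) ∧
    ¬ Sat (intervene M g) φ

/-- `Xs` is a complex cause of `φ` in `M`: AC1, AC2 and the minimality condition AC3. -/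
noncomputable def ComplexCause (M : CausalModel U V D) (φ : BForm V D) (Xs : Set V) : Prop :=
  AC12 M φ Xs ∧ ∀ Ys : Set V, Ys ⊂ Xs → ¬ AC12 M φ Ys

/-- The HP theory: `X ∈ HP(M,φ)` iff `X` belongs to some complex cause of `φ` in `M`. -/
noncomputable def HP : CausalTheory U V D := fun M φ =>
  {X | ∃ Xs : Set V, X ∈ Xs ∧ ComplexCause M φ Xs}

/-- Helper: a relation admitting a strictly monotone rank function is well-founded. -/
theorem wf_of_rank {α : Type} (r : α → α → Prop) (rk : α → ℕ)
    (h : ∀ a b, r a b → rk a < rk b) : WellFounded r :=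
  Subrelation.wf (fun {a b} hr => h a b hr) (InvImage.wf rk Nat.lt_wfRel.wf)



/-- The endogenous variables of the Jane–Julie models. -/
inductive JVar : Type
  | J1 | J2 | B
deriving DecidableEq

instance : Fintype JVar := ⟨{JVar.J1, JVar.J2, JVar.B}, by intro x; cases x <;> simp⟩

open JVar

/-- The Jane–Julie model `M₂`: ranges `R(U₁) = R(J₁) = {0, 1/2}`,
`R(U₂) = R(J₂) = {0, 1/2, 1}`, `R(B) = {0, 1}`; equations `J₁ = U₁`, `J₂ = U₂`,
`B = 0` if `J₁ + J₂ ≥ 1` and `B = 1` otherwise; context `u = (1/2, 1)`. -/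
noncomputable def M2 : CausalModel (Fin 2) JVar ℚ where
  rangeU := fun i => if i = 0 then {0, 1/2} else {0, 1/2, 1}
  range := fun X => match X with
    | J1 => {0, 1/2}
    | J2 => {0, 1/2, 1}
    | B => {0, 1}
  rangeU_nonempty := by intro W; (try dsimp only); split <;> exact ⟨0, by simp⟩
  range_nonempty := by intro X; cases X <;> exact ⟨0, by simp⟩
  parent := fun Y X => (Y = J1 ∨ Y = J2) ∧ X = B
  acyclic := wf_of_rank _ (fun X => match X with | B => 1 | _ => 0)
    (by rintro a b ⟨h1, rfl⟩; rcases h1 with rfl | rfl <;> simp)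
  F := fun X u v => match X with
    | J1 => u 0
    | J2 => u 1
    | B => if 1 ≤ v J1 + v J2 then 0 else 1
  F_parents := by
    intro X u a b hab
    cases X with
    | J1 => rfl
    | J2 => rfl
    | B =>
      show (if 1 ≤ a J1 + a J2 then (0 : ℚ) else 1) = (if 1 ≤ b J1 + b J2 then (0 : ℚ) else 1)
      rw [hab J1 ⟨Or.inl rfl, rfl⟩, hab J2 ⟨Or.inr rfl, rfl⟩]
  F_range := by
    intro X u v hu hv
    cases X with
    | J1 => simpa using hu 0
    | J2 => simpa using hu 1
    | B =>
      show (if 1 ≤ v J1 + v J2 then (0 : ℚ) else 1) ∈ ({0, 1} : Finset ℚ)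
      split <;> simp
  ctx := fun i => if i = 0 then 1/2 else 1
  ctx_range := by intro W; fin_cases W <;> simp

/-- The basic formula `(B = 0)`. -/
noncomputable def φB : BForm JVar ℚ := .atom B 0

end HPFramework

/-!
In `M₂` the contribution `J₂ = 1` alone already forces `B = 0`, so no intervention holding
`J₂` and `B` at their actual values can falsify `B = 0`. Hence `{J₂}` and `{B}` are complex
causes while `J₁` lies in none: by minimality a complex cause containing `J₂` or `B` is that
singleton, and one avoiding both fails AC2. Lowering `J₂` to `1/2` is permitted in
`ℳ(HP(M₂, B = 0))` because `J₂` is an HP cause, and it turns `J₁` into a but-for cause without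
changing `J₁` or `B`, the only variables outside `HP(M₂, B = 0)`. Presumption forbids exactly
such a witness.
-/

namespace HPFramework

open JVar

variable {U V D : Type} [Fintype U] [Fintype V]

theorem sol_eq_F (M : CausalModel U V D) (X : V) : sol M X = M.F X M.ctx (sol M) := by
  rw [sol, WellFounded.fix_eq]
  exact M.F_parents X M.ctx _ _ fun Y h => by rw [dif_pos h]

theorem sol_intervene (M : CausalModel U V D) (g : PAssign M) (X : V) :
    sol (intervene M g) X = (g.1 X).getD (M.F X M.ctx (sol (intervene M g))) :=
  sol_eq_F _ X

theorem ComplexCause.eq_singleton {M : CausalModel U V D} {φ : BForm V D} {Xs : Set V} {Y : V}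
    (h : ComplexCause M φ Xs) (hY : Y ∈ Xs) (hY' : AC12 M φ {Y}) : Xs = {Y} := by
  by_contra hne
  exact h.2 {Y} (Set.ssubset_iff_subset_ne.2 ⟨Set.singleton_subset_iff.2 hY, Ne.symm hne⟩) hY'

section Interventions

variable [DecidableEq V] {M : CausalModel U V D} {φ : BForm V D}

theorem single_apply (X : V) (x : D) (hx : x ∈ M.range X) (Y : V) :
    (single M X x hx).1 Y = if Y = X then some x else none :=
  rfl

theorem intervene_single_mem_MSet {A : Set V} {X : V} (hX : X ∈ A) (x : D)
    (hx : x ∈ M.range X) : intervene M (single M X x hx) ∈ MSet M A := by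
  refine ⟨single M X x hx, fun Y hY d hd => ?_, rfl⟩
  rw [single_apply, if_neg (ne_of_mem_of_not_mem hX hY).symm] at hd
  cases hd

theorem AC12_singleton_of_mem_ButFor {X : V} (h : X ∈ ButFor M φ) : AC12 M φ {X} := by
  obtain ⟨hφ, x, hx, hnot⟩ := h
  refine ⟨hφ, single M X x hx, ?_, fun Y hY d hd => ?_, hnot⟩
  · rintro Y rfl
    simp [single_apply]
  · rw [single_apply, if_neg (show Y ≠ X from hY)] at hd
    cases hd

theorem mem_HP_of_mem_ButFor {X : V} (h : X ∈ ButFor M φ) (h₀ : ¬ AC12 M φ ∅) : X ∈ HP M φ := by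
  refine ⟨{X}, rfl, AC12_singleton_of_mem_ButFor h, fun Ys hYs => ?_⟩
  rwa [Set.ssubset_singleton_iff.1 hYs]

theorem not_presumption_of_witness {C : CausalTheory U V D} {X : V} (hX : X ∉ C M φ)
    {M' : CausalModel U V D} (hM' : M' ∈ MSet M (C M φ)) (hsol : sol M' X = sol M X)
    (hbf : X ∈ ButFor M' φ) (hagree : ∀ W, W ∉ C M φ → sol M W = sol M' W) :
    ¬ Presumption C := fun hP => by
  obtain ⟨W, hW, hne⟩ := hP M φ X ⟨⟨M', hM', hsol.symm, hbf⟩, hX⟩ M' hM' hsol hbf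
  exact hne (hagree W hW)

end Interventions

theorem sol_M2_J1 : sol M2 J1 = 1 / 2 := by
  rw [sol_eq_F]; rfl

theorem sol_M2_J2 : sol M2 J2 = 1 := by
  rw [sol_eq_F]; rfl

theorem sol_M2_B : sol M2 B = 0 := by
  rw [sol_eq_F]
  change (if (1 : ℚ) ≤ sol M2 J1 + sol M2 J2 then 0 else 1) = 0
  norm_num [sol_M2_J1, sol_M2_J2]

theorem sol_intervene_M2_J1 (g : PAssign M2) : sol (intervene M2 g) J1 = (g.1 J1).getD (1 / 2) :=
  sol_intervene M2 g J1

theorem sol_intervene_M2_J2 (g : PAssign M2) : sol (intervene M2 g) J2 = (g.1 J2).getD 1 :=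
  sol_intervene M2 g J2

theorem sol_intervene_M2_B (g : PAssign M2) : sol (intervene M2 g) B = (g.1 B).getD
    (if 1 ≤ sol (intervene M2 g) J1 + sol (intervene M2 g) J2 then 0 else 1) :=
  sol_intervene M2 g B

theorem sat_intervene_M2 (g : PAssign M2) (hJ2 : ∀ d, g.1 J2 = some d → d = sol M2 J2)
    (hB : ∀ d, g.1 B = some d → d = sol M2 B) : Sat (intervene M2 g) φB := by
  change sol (intervene M2 g) B = 0
  rw [sol_intervene_M2_B]
  cases hgB : g.1 B with
  | some d => exact (hB d hgB).trans sol_M2_B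
  | none =>
    have hJ1 : 0 ≤ sol (intervene M2 g) J1 := by
      rw [sol_intervene_M2_J1]
      cases hg : g.1 J1 with
      | none => norm_num
      | some d =>
        have hd : d = 0 ∨ d = 1 / 2 := by simpa [M2] using g.2 J1 d hg
        rcases hd with rfl | rfl <;> norm_num
    have hJ2' : sol (intervene M2 g) J2 = 1 := by
      rw [sol_intervene_M2_J2]
      cases hg : g.1 J2 with
      | none => rfl
      | some d => exact (hJ2 d hg).trans sol_M2_J2
    rw [Option.getD_none, if_pos (by linarith)]

theorem not_AC12_M2 {Xs : Set JVar} (hJ2 : J2 ∉ Xs) (hB : B ∉ Xs) : ¬ AC12 M2 φB Xs := by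
  rintro ⟨-, g, -, hfix, hnot⟩
  exact hnot (sat_intervene_M2 g (hfix J2 hJ2) (hfix B hB))

theorem J2_mem_ButFor_M2 : J2 ∈ ButFor M2 φB := by
  refine ⟨sol_M2_B, 0, by simp [M2], fun h => ?_⟩
  change sol (intervene M2 _) B = 0 at h
  rw [sol_intervene_M2_B, sol_intervene_M2_J1, sol_intervene_M2_J2] at h
  simp only [single_apply, reduceCtorEq, if_false, if_true, Option.getD_none, Option.getD_some] at h
  norm_num at h

theorem B_mem_ButFor_M2 : B ∈ ButFor M2 φB := by
  refine ⟨sol_M2_B, 1, by simp [M2], fun h => ?_⟩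
  change sol (intervene M2 _) B = 0 at h
  rw [sol_intervene_M2_B] at h
  simp [single_apply] at h

theorem J2_mem_HP_M2 : J2 ∈ HP M2 φB :=
  mem_HP_of_mem_ButFor J2_mem_ButFor_M2 (not_AC12_M2 id id)

theorem J1_not_mem_HP_M2 : J1 ∉ HP M2 φB := by
  rintro ⟨Xs, hJ1, hcc⟩
  by_cases hJ2 : J2 ∈ Xs
  · simp [hcc.eq_singleton hJ2 (AC12_singleton_of_mem_ButFor J2_mem_ButFor_M2)] at hJ1
  by_cases hB : B ∈ Xs
  · simp [hcc.eq_singleton hB (AC12_singleton_of_mem_ButFor B_mem_ButFor_M2)] at hJ1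
  exact not_AC12_M2 hJ2 hB hcc.1

/-- `M₂[J₂ ← 1/2]`: neither contribution alone reaches the threshold any more. -/
noncomputable def M2' : CausalModel (Fin 2) JVar ℚ :=
  intervene M2 (single M2 J2 (1 / 2) (by simp [M2]))

theorem M2'_mem_MSet : M2' ∈ MSet M2 (HP M2 φB) :=
  intervene_single_mem_MSet J2_mem_HP_M2 _ _

theorem sol_M2'_J1 : sol M2' J1 = sol M2 J1 := by
  rw [M2', sol_intervene_M2_J1, sol_M2_J1]; rfl

theorem sol_M2'_B : sol M2' B = sol M2 B := by
  rw [M2', sol_intervene_M2_B, sol_intervene_M2_J1, sol_intervene_M2_J2, sol_M2_B]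
  simp only [single_apply, reduceCtorEq, if_false, if_true, Option.getD_none, Option.getD_some]
  norm_num

theorem J1_mem_ButFor_M2' : J1 ∈ ButFor M2' φB := by
  refine ⟨sol_M2'_B.trans sol_M2_B, 0, by simp [M2', intervene, M2], fun h => ?_⟩
  set M2'' := intervene M2' (single M2' J1 0 _)
  have hJ1 : sol M2'' J1 = 0 := sol_eq_F _ _
  have hJ2 : sol M2'' J2 = 1 / 2 := sol_eq_F _ _
  change sol M2'' B = 0 at h
  rw [sol_eq_F] at h
  change (if (1 : ℚ) ≤ sol M2'' J1 + sol M2'' J2 then 0 else 1) = 0 at h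
  norm_num [hJ1, hJ2] at h

theorem sol_M2_eq_sol_M2'_of_not_mem_HP (W : JVar) (hW : W ∉ HP M2 φB) :
    sol M2 W = sol M2' W := by
  cases W with
  | J1 => exact sol_M2'_J1.symm
  | J2 => exact absurd J2_mem_HP_M2 hW
  | B => exact sol_M2'_B.symm

/-- the HP theory does not satisfy the principle of presumption;
concretely, in `M₂`, `J₁` is a preempted cause of `(B = 0)` w.r.t. HP, yet there is
`M' ∈ ℳ(HP(M₂,(B=0)))` with `S_{M'}(J₁) = S_{M₂}(J₁)` and `J₁ ∈ ButFor(M',(B=0))`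
such that every `W ∉ HP(M₂,(B=0))` satisfies `S_{M₂}(W) = S_{M'}(W)`. -/
theorem hp_violates_presumption :
    ¬ Presumption (HP (U := Fin 2) (V := JVar) (D := ℚ)) ∧
    Preempted HP M2 φB J1 ∧
    ∃ M' ∈ MSet M2 (HP M2 φB), sol M' J1 = sol M2 J1 ∧ J1 ∈ ButFor M' φB ∧
      ∀ W, W ∉ HP M2 φB → sol M2 W = sol M' W :=
  ⟨not_presumption_of_witness J1_not_mem_HP_M2 M2'_mem_MSet sol_M2'_J1 J1_mem_ButFor_M2'
      sol_M2_eq_sol_M2'_of_not_mem_HP,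
    ⟨⟨M2', M2'_mem_MSet, sol_M2'_J1.symm, J1_mem_ButFor_M2'⟩, J1_not_mem_HP_M2⟩,
    M2', M2'_mem_MSet, sol_M2'_J1, J1_mem_ButFor_M2', sol_M2_eq_sol_M2'_of_not_mem_HP⟩

end HPFramework
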